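/- Let G' be a finite simple graph on vertex set V and let G be its pendant-pair graph, with source-sink pairs (a_v, b_v) for v ∈ V. For every natural number t, G' has an independent set of size t if and only if there exists a set S ⊆ V with |S| = t and a family of induced disjoint paths in G consisting, for each v ∈ S, of a path from a_v to b_v. -/

import Mathlib

open SimpleGraph

variable {V : Type*}

/-- Original vertex `v` inside the pendant-pair graph. -/
def orig (v : V) : V ⊕ (V ⊕ V) := Sum.inl v

/-- First pendant vertex `a_v` attached to `v`. -/
def pA (v : V) : V ⊕ (V ⊕ V) := Sum.inr (Sum.inl v)

/-- Second pendant vertex `b_v` attached to `v`. -/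
def pB (v : V) : V ⊕ (V ⊕ V) := Sum.inr (Sum.inr v)

/-- The pendant-pair graph of `G'`: keep all edges of `G'` between original
vertices and attach to every vertex `v` the two pendant vertices `a_v`, `b_v`. -/
def pendantGraph (G' : SimpleGraph V) : SimpleGraph (V ⊕ (V ⊕ V)) :=
  SimpleGraph.fromRel (fun x y =>
    (∃ u v : V, x = orig u ∧ y = orig v ∧ G'.Adj u v) ∨
    (∃ v : V, x = orig v ∧ (y = pA v ∨ y = pB v)))

lemma pendantGraph_adj_pA (G' : SimpleGraph V) (v : V) :
    (pendantGraph G').Adj (pA v) (orig v) :=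
  ⟨by simp [pA, orig], Or.inr (Or.inr ⟨v, rfl, Or.inl rfl⟩)⟩

lemma pendantGraph_adj_pB (G' : SimpleGraph V) (v : V) :
    (pendantGraph G').Adj (orig v) (pB v) :=
  ⟨by simp [pB, orig], Or.inl (Or.inr ⟨v, rfl, Or.inr rfl⟩)⟩

/-- The canonical path `a_v, v, b_v` in the pendant-pair graph. -/
def pathAVB (G' : SimpleGraph V) (v : V) : (pendantGraph G').Walk (pA v) (pB v) :=
  SimpleGraph.Walk.cons (pendantGraph_adj_pA G' v)
    (SimpleGraph.Walk.cons (pendantGraph_adj_pB G' v) SimpleGraph.Walk.nil)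

/-- A walk is an induced path if it is a path and the only edges of the graph
between its vertices are its own edges. -/
def IsInducedPathW {α : Type*} (G : SimpleGraph α) {u v : α} (p : G.Walk u v) : Prop :=
  p.IsPath ∧ ∀ x ∈ p.support, ∀ y ∈ p.support, G.Adj x y → s(x, y) ∈ p.edges

/-- Two walks are totally disjoint if they share no vertex and no vertex of one
is adjacent to a vertex of the other. -/
def WalksFarApart {α : Type*} (G : SimpleGraph α) {u v w z : α}
    (p : G.Walk u v) (q : G.Walk w z) : Prop :=
  ∀ x ∈ p.support, ∀ y ∈ q.support, x ≠ y ∧ ¬ G.Adj x y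

/-!
If `S` is independent, the paths `a_v, v, b_v` (`v ∈ S`) are far apart: projecting every vertex
of the pendant-pair graph onto the vertex of `G'` it hangs from sends adjacent vertices to equal
or adjacent vertices of `G'`. Conversely, every `a_v`–`b_v` walk passes through `v`, the only
neighbour of `a_v`, so far-apart paths force `S` to be independent.
-/

section PendantGraph

variable {G' : SimpleGraph V}

def baseVertex : V ⊕ (V ⊕ V) → V := Sum.elim id (Sum.elim id id)

@[simp] lemma baseVertex_orig (v : V) : baseVertex (orig v) = v := rfl

@[simp] lemma baseVertex_pA (v : V) : baseVertex (pA v) = v := rfl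

@[simp] lemma baseVertex_pB (v : V) : baseVertex (pB v) = v := rfl

lemma pendantGraph_adj_baseVertex {x y : V ⊕ (V ⊕ V)} (h : (pendantGraph G').Adj x y) :
    baseVertex x = baseVertex y ∨ G'.Adj (baseVertex x) (baseVertex y) := by
  obtain ⟨-, (⟨u, v, rfl, rfl, huv⟩ | ⟨v, rfl, rfl | rfl⟩) |
    (⟨u, v, rfl, rfl, huv⟩ | ⟨v, rfl, rfl | rfl⟩)⟩ := h
  all_goals simp_all [G'.adj_comm]

lemma pendantGraph_adj_orig_orig_iff (u v : V) :
    (pendantGraph G').Adj (orig u) (orig v) ↔ G'.Adj u v := by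
  simpa [pendantGraph, orig, pA, pB, G'.adj_comm v u] using fun h => h.ne

@[simp] lemma pendantGraph_adj_pA_iff (v : V) (y : V ⊕ (V ⊕ V)) :
    (pendantGraph G').Adj (pA v) y ↔ y = orig v := by
  simp +contextual [pendantGraph, orig, pA, pB]

@[simp] lemma pendantGraph_adj_pB_iff (v : V) (y : V ⊕ (V ⊕ V)) :
    (pendantGraph G').Adj (pB v) y ↔ y = orig v := by
  simp +contextual [pendantGraph, orig, pA, pB]

@[simp] lemma pathAVB_support (v : V) :
    (pathAVB G' v).support = [pA v, orig v, pB v] := rfl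

@[simp] lemma pathAVB_edges (v : V) :
    (pathAVB G' v).edges = [s(pA v, orig v), s(orig v, pB v)] := rfl

lemma baseVertex_eq_of_mem_support_pathAVB {v : V} {x : V ⊕ (V ⊕ V)}
    (hx : x ∈ (pathAVB G' v).support) : baseVertex x = v := by
  simp only [pathAVB_support, List.mem_cons, List.not_mem_nil, or_false] at hx
  rcases hx with rfl | rfl | rfl <;> rfl

lemma isInducedPathW_pathAVB (v : V) :
    IsInducedPathW (pendantGraph G') (pathAVB G' v) := by
  refine ⟨by rw [Walk.isPath_def, pathAVB_support]; simp [orig, pA, pB], ?_⟩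
  simp only [pathAVB_support, List.mem_cons, List.not_mem_nil, or_false]
  rintro x (rfl | rfl | rfl) y (rfl | rfl | rfl) hxy <;>
    simp [Sym2.eq_swap] at hxy ⊢ <;> simp [orig, pA, pB] at hxy

lemma walksFarApart_pathAVB {u v : V} (huv : u ≠ v) (hnadj : ¬ G'.Adj u v) :
    WalksFarApart (pendantGraph G') (pathAVB G' u) (pathAVB G' v) := by
  intro x hx y hy
  rw [← baseVertex_eq_of_mem_support_pathAVB hx, ← baseVertex_eq_of_mem_support_pathAVB hy]
    at huv hnadj
  exact ⟨fun hxy => huv (congrArg baseVertex hxy),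
    fun hxy => (pendantGraph_adj_baseVertex hxy).elim huv hnadj⟩

lemma orig_mem_support_of_pA {v : V} {w : V ⊕ (V ⊕ V)}
    (p : (pendantGraph G').Walk (pA v) w) (hw : pA v ≠ w) : orig v ∈ p.support := by
  have hsnd : p.snd = orig v :=
    (pendantGraph_adj_pA_iff v _).1 (p.adj_snd (Walk.not_nil_of_ne hw))
  exact hsnd ▸ p.getVert_mem_support 1

end PendantGraph

theorem indepSet_iff_inducedDisjointPaths_general
    (G' : SimpleGraph V) (t : ℕ) :
    (∃ S : Finset V, S.card = t ∧ ∀ u ∈ S, ∀ v ∈ S, ¬ G'.Adj u v) ↔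
    (∃ S : Finset V, S.card = t ∧
      ∃ P : ∀ v ∈ S, (pendantGraph G').Walk (pA v) (pB v),
        (∀ v (hv : v ∈ S), IsInducedPathW (pendantGraph G') (P v hv)) ∧
        ∀ u v (hu : u ∈ S) (hv : v ∈ S), u ≠ v →
          WalksFarApart (pendantGraph G') (P u hu) (P v hv)) := by
  constructor
  · rintro ⟨S, hcard, hind⟩
    exact ⟨S, hcard, fun v _ => pathAVB G' v, fun v _ => isInducedPathW_pathAVB v,
      fun u v hu hv huv => walksFarApart_pathAVB huv (hind u hu v hv)⟩
  · rintro ⟨S, hcard, P, -, hfar⟩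
    refine ⟨S, hcard, fun u hu v hv hadj => ?_⟩
    have horig : ∀ w (hw : w ∈ S), orig w ∈ (P w hw).support :=
      fun w hw => orig_mem_support_of_pA _ (by simp [pA, pB])
    exact (hfar u v hu hv hadj.ne _ (horig u hu) _ (horig v hv)).2
      ((pendantGraph_adj_orig_orig_iff u v).2 hadj)

/-- Correctness of the reduction in Lemma 2: `G'` has an independent set of
size `t` iff there are `t` source-sink pairs `(a_v, b_v)`, `v ∈ S`, that can
be connected by a family of induced disjoint paths in the pendant-pair graph. -/
theorem indepSet_iff_inducedDisjointPaths [Fintype V] [DecidableEq V]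
    (G' : SimpleGraph V) (t : ℕ) :
    (∃ S : Finset V, S.card = t ∧ ∀ u ∈ S, ∀ v ∈ S, ¬ G'.Adj u v) ↔
    (∃ S : Finset V, S.card = t ∧
      ∃ P : ∀ v ∈ S, (pendantGraph G').Walk (pA v) (pB v),
        (∀ v (hv : v ∈ S), IsInducedPathW (pendantGraph G') (P v hv)) ∧
        ∀ u v (hu : u ∈ S) (hv : v ∈ S), u ≠ v →
          WalksFarApart (pendantGraph G') (P u hu) (P v hv)) :=
  indepSet_iff_inducedDisjointPaths_general G' t
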